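/- arXiv:2012.10943 — 2 statements merged into one kernel-verified Lean document; each statement's English description precedes it below -/
import Mathlib

section
/- Let $\mathcal{H}$ be a reproducing kernel Hilbert space of real functions on a set $\mathcal{X}$, so for every $x$ there is $C_x < \infty$ with $|v(x)| \leq C_x \|v\|_{\mathcal{H}}$ for all $v$. Fix points $z_1, \dots, z_M \in \mathcal{X}$, constants $M \geq 2$, $\sigma > 0$, and let $\ell(v) = \log p(v(z_1), \dots, v(z_M))$ where $p$ is the noisy-argmax probability $p(w) = \mathbb{P}(W_1 > W_j\, \forall j \neq 1)$ with $W_j \sim \mathcal{N}(w_j, \sigma^2)$ independent. Then there exists $K > 0$ such that $0 \leq -\ell(v) \leq K(1 + \|v\|_{\mathcal{H}}^2)$ for all $v \in \mathcal{H}$. -/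
/-!
Choose the box where the first coordinate lies in `(B, B + 1]` and all others in `(B - 1, B]`,
with `B = c ‖v‖` bounding every `|v(z_j)|`. The box lies in the argmax event, and on it every
Gaussian density is at least its value at distance `2B + 1` from the mean, so
`p ≥ ((2πσ²)^{-1/2} exp (-(2B + 1)² / (2σ²)))^M`. Taking logarithms gives a bound on `-ℓ(v)`
that is quadratic in `B`, hence in `‖v‖`; nonnegativity is `p ≤ 1`.
-/

open MeasureTheory ProbabilityTheory

/-- The noisy-argmax probability `p(w) = P(W_1 > W_j ∀ j ≠ 1)` with independent
`W_j ~ N(w_j, σ²)`. -/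
noncomputable def argmaxProb (M : ℕ) [NeZero M] (σ : ℝ) (w : Fin M → ℝ) : ℝ :=
  ((Measure.pi fun j : Fin M => gaussianReal (w j) (Real.toNNReal (σ ^ 2)))
    {u | ∀ j : Fin M, j ≠ 0 → u j < u 0}).toReal

open Real Set
open scoped NNReal

namespace ProbabilityTheory

lemma gaussianPDFReal_le_of_abs_sub_le {μ μ' x y : ℝ} {v : ℝ≥0} (h : |y - μ| ≤ |x - μ'|) :
    gaussianPDFReal μ' v x ≤ gaussianPDFReal μ v y := by
  unfold gaussianPDFReal
  gcongr (_ * exp (-?_ / _))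
  exact sq_le_sq.mpr h

lemma log_gaussianPDFReal (μ : ℝ) {v : ℝ≥0} (hv : v ≠ 0) (x : ℝ) :
    log (gaussianPDFReal μ v x) = -log √(2 * π * v) - (x - μ) ^ 2 / (2 * v) := by
  rw [gaussianPDFReal, log_mul (by positivity) (exp_ne_zero _), log_inv, log_exp]
  ring

lemma ofReal_mul_volume_le_gaussianReal {μ c : ℝ} {v : ℝ≥0} (hv : v ≠ 0) {s : Set ℝ}
    (hc : ∀ x ∈ s, c ≤ gaussianPDFReal μ v x) :
    ENNReal.ofReal c * volume s ≤ gaussianReal μ v s := by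
  rw [gaussianReal_apply _ hv, ← setLIntegral_const]
  exact setLIntegral_mono (measurable_gaussianPDF _ _) fun x hx ↦ ENNReal.ofReal_le_ofReal (hc x hx)

end ProbabilityTheory

section argmaxProb

variable {M : ℕ} [NeZero M] {σ : ℝ}

lemma argmaxProb_nonneg (w : Fin M → ℝ) : 0 ≤ argmaxProb M σ w := ENNReal.toReal_nonneg

lemma argmaxProb_le_one (w : Fin M → ℝ) : argmaxProb M σ w ≤ 1 :=
  ENNReal.toReal_le_of_le_ofReal zero_le_one (by simpa using prob_le_one)

lemma pow_gaussianPDFReal_le_argmaxProb (hσ : σ ≠ 0) {w : Fin M → ℝ} {B : ℝ}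
    (hw : ∀ j, |w j| ≤ B) :
    gaussianPDFReal 0 (σ ^ 2).toNNReal (2 * B + 1) ^ M ≤ argmaxProb M σ w := by
  set v := (σ ^ 2).toNNReal
  have hv : v ≠ 0 := by simp [v, hσ]
  set c := gaussianPDFReal 0 v (2 * B + 1)
  set l : Fin M → ℝ := fun j ↦ if j = 0 then B else B - 1
  have hbox : univ.pi (fun j ↦ Ioc (l j) (l j + 1)) ⊆ {u | ∀ j, j ≠ 0 → u j < u 0} := by
    intro u hu j hj
    have h0 := (hu 0 (mem_univ _)).1
    have h1 := (hu j (mem_univ _)).2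
    simp only [l, hj, reduceIte] at h0 h1
    linarith
  have hfactor (j : Fin M) :
      ENNReal.ofReal c ≤ gaussianReal (w j) v (Ioc (l j) (l j + 1)) := by
    have hvol : volume (Ioc (l j) (l j + 1)) = 1 := by simp [Real.volume_Ioc]
    rw [← mul_one (ENNReal.ofReal c), ← hvol]
    refine ofReal_mul_volume_le_gaussianReal hv fun x hx ↦ gaussianPDFReal_le_of_abs_sub_le ?_
    have hwj := abs_le.mp (hw j)
    have hl : l j ∈ Icc (B - 1) B := by by_cases j = 0 <;> simp [l, *]
    rw [sub_zero, abs_le]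
    constructor <;> linarith [hx.1, hx.2, le_abs_self (2 * B + 1), hl.1, hl.2]
  have hlower : ENNReal.ofReal (c ^ M) ≤
      Measure.pi (fun j ↦ gaussianReal (w j) v) {u | ∀ j, j ≠ 0 → u j < u 0} :=
    calc ENNReal.ofReal (c ^ M) = ∏ _j : Fin M, ENNReal.ofReal c := by
          rw [ENNReal.ofReal_pow (gaussianPDFReal_nonneg _ _ _), Finset.prod_const,
            Finset.card_univ, Fintype.card_fin]
      _ ≤ ∏ j, gaussianReal (w j) v (Ioc (l j) (l j + 1)) :=
          Finset.prod_le_prod' fun j _ ↦ hfactor j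
      _ = Measure.pi (fun j ↦ gaussianReal (w j) v) (univ.pi fun j ↦ Ioc (l j) (l j + 1)) :=
          (Measure.pi_pi _ _).symm
      _ ≤ _ := measure_mono hbox
  have := ENNReal.toReal_mono (measure_ne_top _ _) hlower
  rwa [ENNReal.toReal_ofReal (pow_nonneg (gaussianPDFReal_nonneg _ _ _) M)] at this

lemma neg_log_argmaxProb_le (hσ : σ ≠ 0) {w : Fin M → ℝ} {B : ℝ} (hw : ∀ j, |w j| ≤ B) :
    -log (argmaxProb M σ w) ≤ M * (|log √(2 * π * σ ^ 2)| + (1 + 4 * B ^ 2) / σ ^ 2) := by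
  have hv : (σ ^ 2).toNNReal ≠ 0 := by simp [hσ]
  have hσ2 : ((σ ^ 2).toNNReal : ℝ) = σ ^ 2 := Real.coe_toNNReal _ (sq_nonneg σ)
  have hlog := log_le_log (pow_pos (gaussianPDFReal_pos _ _ _ hv) M)
    (pow_gaussianPDFReal_le_argmaxProb hσ hw)
  rw [log_pow, log_gaussianPDFReal _ hv, hσ2, sub_zero] at hlog
  have hquad : (2 * B + 1) ^ 2 / (2 * σ ^ 2) ≤ (1 + 4 * B ^ 2) / σ ^ 2 := by
    rw [div_le_div_iff₀ (by positivity) (by positivity)]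
    nlinarith [sq_nonneg (2 * B - 1), sq_nonneg σ]
  calc -log (argmaxProb M σ w)
      ≤ M * (log √(2 * π * σ ^ 2) + (2 * B + 1) ^ 2 / (2 * σ ^ 2)) := by linarith
    _ ≤ M * (|log √(2 * π * σ ^ 2)| + (1 + 4 * B ^ 2) / σ ^ 2) := by
      gcongr
      exact le_abs_self _

end argmaxProb

lemma exists_abs_eval_le {X H : Type*} [SeminormedAddCommGroup H] [Module ℝ H] {ι : Type*}
    [Fintype ι] (ev : H →ₗ[ℝ] (X → ℝ)) (C : X → ℝ)
    (hC : ∀ (v : H) (x : X), |ev v x| ≤ C x * ‖v‖) (z : ι → X) :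
    ∃ c, ∀ v j, |ev v (z j)| ≤ c * ‖v‖ := by
  refine ⟨∑ j, |C (z j)|, fun v j ↦ (hC v (z j)).trans ?_⟩
  gcongr
  exact (le_abs_self _).trans
    (Finset.single_le_sum (f := fun i ↦ |C (z i)|) (fun i _ ↦ abs_nonneg _) (Finset.mem_univ j))

theorem stmt_11_general {X : Type*} {H : Type*} [NormedAddCommGroup H] [InnerProductSpace ℝ H]
    (ev : H →ₗ[ℝ] (X → ℝ)) (C : X → ℝ)
    (hC : ∀ (v : H) (x : X), |ev v x| ≤ C x * ‖v‖)
    (M : ℕ) [NeZero M] (σ : ℝ) (hσ : 0 < σ) (z : Fin M → X) :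
    ∃ K > (0 : ℝ), ∀ v : H,
      0 ≤ -(Real.log (argmaxProb M σ fun j => ev v (z j))) ∧
      -(Real.log (argmaxProb M σ fun j => ev v (z j))) ≤ K * (1 + ‖v‖ ^ 2) := by
  obtain ⟨c, hcv⟩ := exists_abs_eval_le ev C hC z
  set L := |log √(2 * π * σ ^ 2)|
  refine ⟨M * (L + (1 + 4 * c ^ 2) / σ ^ 2) + 1, by positivity, fun v ↦ ⟨?_, ?_⟩⟩
  · exact neg_nonneg.mpr (log_nonpos (argmaxProb_nonneg _) (argmaxProb_le_one _))
  have hv2 : 0 ≤ ‖v‖ ^ 2 := sq_nonneg _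
  calc -log (argmaxProb M σ fun j ↦ ev v (z j))
      ≤ M * (L + (1 + 4 * (c * ‖v‖) ^ 2) / σ ^ 2) := neg_log_argmaxProb_le hσ.ne' (hcv v)
    _ ≤ M * (L + (1 + 4 * c ^ 2) / σ ^ 2) * (1 + ‖v‖ ^ 2) := by
      rw [mul_assoc, add_mul, div_mul_eq_mul_div]
      gcongr
      · exact le_mul_of_one_le_right (abs_nonneg _) (by linarith)
      · nlinarith [mul_nonneg (sq_nonneg c) hv2]
    _ ≤ _ := by gcongr; linarith

/-- Theorem 2 (first part): for an RKHS `H` of real functions on `X` (realised via a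
linear evaluation map `ev` with pointwise bounds `|ev v x| ≤ C x ‖v‖`), the negative
log noisy-argmax likelihood `-ℓ(v) = -log p(v(z_1),…,v(z_M))` is nonnegative and
bounded by `K(1 + ‖v‖²)` for some `K > 0`. -/
theorem stmt_11 {X : Type*} {H : Type*} [NormedAddCommGroup H] [InnerProductSpace ℝ H]
    [CompleteSpace H]
    (ev : H →ₗ[ℝ] (X → ℝ)) (C : X → ℝ)
    (hC : ∀ (v : H) (x : X), |ev v x| ≤ C x * ‖v‖)
    (M : ℕ) [NeZero M] (hM : 2 ≤ M) (σ : ℝ) (hσ : 0 < σ) (z : Fin M → X) :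
    ∃ K > (0 : ℝ), ∀ v : H,
      0 ≤ -(Real.log (argmaxProb M σ fun j => ev v (z j))) ∧
      -(Real.log (argmaxProb M σ fun j => ev v (z j))) ≤ K * (1 + ‖v‖ ^ 2) :=
  stmt_11_general ev C hC M σ hσ z
end

section
/- With the network of the previous statement, for every $r > 0$, every $n$, and every $x$, there exists a constant $\bar{K}(r, x, n)$ such that for all parameter sequences $\theta, \tilde{\theta} \in \ell^2$ with $\max(\|\theta\|_{\ell^2}, \|\tilde{\theta}\|_{\ell^2}) \leq r$, the corresponding network outputs $u_\theta, u_{\tilde\theta}$ satisfy $(u_\theta(x) - u_{\tilde\theta}(x))^2 \leq 2\,\bar{K}(r, x, n)\, \|\theta - \tilde{\theta}\|_{\ell^2}^2$. -/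
/-!
Both the size of each layer and its sensitivity to the parameters are propagated layer by layer.
Writing `f_l` for the `l`-th layer, Cauchy–Schwarz gives `‖c + V y‖² ≤ 2 (‖c‖² + ‖V‖_F² ‖y‖²)`,
so `‖f_l‖²` is bounded by a constant `B_l` depending only on `r`, `‖x‖` and `l`. Since the
first layer is affine in the parameters and
`f_{l+1} - f̃_{l+1} = (b - b̃) + (W - W̃) ζ(f_l) + W̃ (ζ(f_l) - ζ(f̃_l))`,
the `1`-Lipschitz bound on `ζ` turns this into `‖f_{l+1} - f̃_{l+1}‖² ≤ L_{l+1} ‖θ - θ̃‖²`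
with `L_{l+1} = 3 (1 + B_l + r² L_l)`.
-/

open Finset

/-- The layer functions of a fully connected feed-forward network: layer index `0`
corresponds to the first layer `f^{(1)}`, and layer `l+1` has inputs from the `N l`
nodes of layer `l`. -/
noncomputable def netF (d : ℕ) (N : ℕ → ℕ) (w : ℕ → ℕ → ℕ → ℝ) (b : ℕ → ℕ → ℝ)
    (ζ : ℝ → ℝ) (x : Fin d → ℝ) : ℕ → ℕ → ℝ
  | 0, i => b 0 i + ∑ j : Fin d, w 0 i j.val * x j
  | l + 1, i => b (l + 1) i +
      ∑ j ∈ Finset.range (N l), w (l + 1) i j * ζ (netF d N w b ζ x l j)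

section SumSq

variable {ι κ : Type*} (s : Finset ι)

lemma sum_sq_add_le (f g : ι → ℝ) :
    ∑ i ∈ s, (f i + g i) ^ 2 ≤ 2 * (∑ i ∈ s, f i ^ 2 + ∑ i ∈ s, g i ^ 2) := by
  rw [← sum_add_distrib, mul_sum]
  exact sum_le_sum fun i _ => by nlinarith [sq_nonneg (f i - g i)]

lemma sum_sq_add_add_le (f g h : ι → ℝ) :
    ∑ i ∈ s, (f i + g i + h i) ^ 2 ≤
      3 * (∑ i ∈ s, f i ^ 2 + ∑ i ∈ s, g i ^ 2 + ∑ i ∈ s, h i ^ 2) := by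
  rw [← sum_add_distrib, ← sum_add_distrib, mul_sum]
  exact sum_le_sum fun i _ => by
    nlinarith [sq_nonneg (f i - g i), sq_nonneg (g i - h i), sq_nonneg (f i - h i)]

variable {s} {t : Finset κ}

lemma sum_sq_sum_mul_le {v : ι → κ → ℝ} {y : κ → ℝ} {V Y : ℝ}
    (hv : ∑ i ∈ s, ∑ j ∈ t, v i j ^ 2 ≤ V) (hy : ∑ j ∈ t, y j ^ 2 ≤ Y) :
    ∑ i ∈ s, (∑ j ∈ t, v i j * y j) ^ 2 ≤ V * Y := by
  have hV : 0 ≤ V := (sum_nonneg fun i _ => sum_nonneg fun j _ => sq_nonneg (v i j)).trans hv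
  calc ∑ i ∈ s, (∑ j ∈ t, v i j * y j) ^ 2
      ≤ ∑ i ∈ s, (∑ j ∈ t, v i j ^ 2) * ∑ j ∈ t, y j ^ 2 :=
        sum_le_sum fun i _ => sum_mul_sq_le_sq_mul_sq t (v i) y
    _ = (∑ i ∈ s, ∑ j ∈ t, v i j ^ 2) * ∑ j ∈ t, y j ^ 2 := (sum_mul ..).symm
    _ ≤ V * Y := mul_le_mul hv hy (sum_nonneg fun j _ => sq_nonneg (y j)) hV

lemma sum_sq_affine_le {c : ι → ℝ} {v : ι → κ → ℝ} {y : κ → ℝ} {R Y : ℝ}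
    (hc : ∑ i ∈ s, c i ^ 2 ≤ R) (hv : ∑ i ∈ s, ∑ j ∈ t, v i j ^ 2 ≤ R)
    (hy : ∑ j ∈ t, y j ^ 2 ≤ Y) :
    ∑ i ∈ s, (c i + ∑ j ∈ t, v i j * y j) ^ 2 ≤ 2 * R * (1 + Y) := by
  have := sum_sq_sum_mul_le hv hy
  linarith [sum_sq_add_le s c fun i => ∑ j ∈ t, v i j * y j]

end SumSq

lemma sq_sub_le_of_lipschitzWith_one {ζ : ℝ → ℝ} (hζ : LipschitzWith 1 ζ) (a b : ℝ) :
    (ζ a - ζ b) ^ 2 ≤ (a - b) ^ 2 :=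
  sq_le_sq.2 (by simpa [Real.dist_eq] using hζ.dist_le_mul a b)

lemma sq_le_of_lipschitzWith_one {ζ : ℝ → ℝ} (hζ : LipschitzWith 1 ζ) (hζ0 : ζ 0 = 0)
    (a : ℝ) : ζ a ^ 2 ≤ a ^ 2 := by
  simpa [hζ0] using sq_sub_le_of_lipschitzWith_one hζ a 0

noncomputable def layerSqNorm (d : ℕ) (N : ℕ → ℕ) (w : ℕ → ℕ → ℕ → ℝ) (b : ℕ → ℕ → ℝ)
    (l : ℕ) : ℝ :=
  ∑ i ∈ range (N l), b l i ^ 2 +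
    ∑ i ∈ range (N l), ∑ j ∈ range (if l = 0 then d else N (l - 1)), w l i j ^ 2

/-- `R` bounds the squared parameter norm of every layer and `X` is the squared norm of the
input. -/
noncomputable def outputBound (R X : ℝ) : ℕ → ℝ
  | 0 => 2 * R * (1 + X)
  | l + 1 => 2 * R * (1 + outputBound R X l)

noncomputable def lipConst (R X : ℝ) : ℕ → ℝ
  | 0 => 2 * (1 + X)
  | l + 1 => 3 * (1 + outputBound R X l + R * lipConst R X l)

section Network

variable {d : ℕ} {N : ℕ → ℕ} {w w' : ℕ → ℕ → ℕ → ℝ} {b b' : ℕ → ℕ → ℝ}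

lemma layerSqNorm_nonneg (l : ℕ) : 0 ≤ layerSqNorm d N w b l :=
  add_nonneg (sum_nonneg fun _ _ => sq_nonneg _)
    (sum_nonneg fun _ _ => sum_nonneg fun _ _ => sq_nonneg _)

lemma layerSqNorm_le_of_sum_le {n l : ℕ} {R : ℝ}
    (h : ∑ k ∈ range (n + 1), layerSqNorm d N w b k ≤ R) (hl : l ≤ n) :
    layerSqNorm d N w b l ≤ R :=
  (single_le_sum (fun k _ => layerSqNorm_nonneg k) (mem_range.2 (Nat.lt_succ_of_le hl))).trans h

lemma sum_sq_bias_le_layerSqNorm (l : ℕ) :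
    ∑ i ∈ range (N l), b l i ^ 2 ≤ layerSqNorm d N w b l :=
  le_add_of_nonneg_right (sum_nonneg fun _ _ => sum_nonneg fun _ _ => sq_nonneg _)

lemma sum_sq_weight_zero_le_layerSqNorm :
    ∑ i ∈ range (N 0), ∑ j : Fin d, w 0 i j ^ 2 ≤ layerSqNorm d N w b 0 := by
  calc ∑ i ∈ range (N 0), ∑ j : Fin d, w 0 i j ^ 2
      = ∑ i ∈ range (N 0), ∑ j ∈ range d, w 0 i j ^ 2 :=
        sum_congr rfl fun i _ => Fin.sum_univ_eq_sum_range (fun j => w 0 i j ^ 2) d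
    _ ≤ layerSqNorm d N w b 0 := le_add_of_nonneg_left (sum_nonneg fun _ _ => sq_nonneg _)

lemma sum_sq_weight_succ_le_layerSqNorm (l : ℕ) :
    ∑ i ∈ range (N (l + 1)), ∑ j ∈ range (N l), w (l + 1) i j ^ 2 ≤
      layerSqNorm d N w b (l + 1) :=
  le_add_of_nonneg_left (sum_nonneg fun _ _ => sq_nonneg _)

variable {ζ : ℝ → ℝ} {x : Fin d → ℝ}

lemma netF_zero_sub (i : ℕ) :
    netF d N w b ζ x 0 i - netF d N w' b' ζ x 0 i = netF d N (w - w') (b - b') ζ x 0 i := by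
  simp only [netF, Pi.sub_apply, sub_mul, sum_sub_distrib]
  ring

lemma netF_succ_sub (l i : ℕ) :
    netF d N w b ζ x (l + 1) i - netF d N w' b' ζ x (l + 1) i =
      (b (l + 1) i - b' (l + 1) i) +
        ∑ j ∈ range (N l), (w (l + 1) i j - w' (l + 1) i j) * ζ (netF d N w b ζ x l j) +
        ∑ j ∈ range (N l),
          w' (l + 1) i j * (ζ (netF d N w b ζ x l j) - ζ (netF d N w' b' ζ x l j)) := by
  simp only [netF, sub_mul, mul_sub, sum_sub_distrib]
  ring

theorem sum_sq_netF_le (hζ : LipschitzWith 1 ζ) (hζ0 : ζ 0 = 0) {R : ℝ} :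
    ∀ l, (∀ k ≤ l, layerSqNorm d N w b k ≤ R) →
      ∑ i ∈ range (N l), netF d N w b ζ x l i ^ 2 ≤ outputBound R (∑ j, x j ^ 2) l
  | 0, hθ =>
    sum_sq_affine_le ((sum_sq_bias_le_layerSqNorm 0).trans (hθ 0 le_rfl))
      (sum_sq_weight_zero_le_layerSqNorm.trans (hθ 0 le_rfl)) le_rfl
  | l + 1, hθ =>
    sum_sq_affine_le ((sum_sq_bias_le_layerSqNorm _).trans (hθ _ le_rfl))
      ((sum_sq_weight_succ_le_layerSqNorm l).trans (hθ _ le_rfl))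
      ((sum_le_sum fun _ _ => sq_le_of_lipschitzWith_one hζ hζ0 _).trans
        (sum_sq_netF_le hζ hζ0 l fun k hk => hθ k (hk.trans l.le_succ)))

theorem sum_sq_netF_sub_le (hζ : LipschitzWith 1 ζ) (hζ0 : ζ 0 = 0) {R D : ℝ} :
    ∀ l, (∀ k ≤ l, layerSqNorm d N w b k ≤ R) → (∀ k ≤ l, layerSqNorm d N w' b' k ≤ R) →
      (∀ k ≤ l, layerSqNorm d N (w - w') (b - b') k ≤ D) →
      ∑ i ∈ range (N l), (netF d N w b ζ x l i - netF d N w' b' ζ x l i) ^ 2 ≤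
        lipConst R (∑ j, x j ^ 2) l * D
  | 0, _, _, hδ => by
    simp only [netF_zero_sub]
    exact (sum_sq_netF_le hζ hζ0 0 hδ).trans_eq (by simp only [outputBound, lipConst]; ring)
  | l + 1, hθ, hθ', hδ => by
    have hX := sum_sq_netF_le hζ hζ0 (x := x) l fun k hk => hθ k (hk.trans l.le_succ)
    have hδX := sum_sq_netF_sub_le hζ hζ0 l (fun k hk => hθ k (hk.trans l.le_succ))
      (fun k hk => hθ' k (hk.trans l.le_succ)) (fun k hk => hδ k (hk.trans l.le_succ))
    have hζX :
        ∑ j ∈ range (N l), ζ (netF d N w b ζ x l j) ^ 2 ≤ outputBound R (∑ j, x j ^ 2) l :=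
      (sum_le_sum fun _ _ => sq_le_of_lipschitzWith_one hζ hζ0 _).trans hX
    have hζδ :
        ∑ j ∈ range (N l), (ζ (netF d N w b ζ x l j) - ζ (netF d N w' b' ζ x l j)) ^ 2 ≤
          lipConst R (∑ j, x j ^ 2) l * D :=
      (sum_le_sum fun _ _ => sq_sub_le_of_lipschitzWith_one hζ _ _).trans hδX
    have hbias := (sum_sq_bias_le_layerSqNorm (l + 1)).trans (hδ _ le_rfl)
    have hweight := sum_sq_sum_mul_le
      ((sum_sq_weight_succ_le_layerSqNorm l).trans (hδ _ le_rfl)) hζX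
    have hweight' := sum_sq_sum_mul_le
      ((sum_sq_weight_succ_le_layerSqNorm l).trans (hθ' _ le_rfl)) hζδ
    simp only [netF_succ_sub]
    refine (sum_sq_add_add_le _ _ _ _).trans ?_
    simp only [Pi.sub_apply] at hbias hweight
    simp only [lipConst]
    linarith

end Network

theorem stmt_14_general (d n : ℕ)
    (ζ : ℝ → ℝ) (hζ : LipschitzWith 1 ζ) (hζ0 : ζ 0 = 0)
    (x : Fin d → ℝ) (r : ℝ) :
    ∃ K : ℝ, ∀ (N : ℕ → ℕ) (w w' : ℕ → ℕ → ℕ → ℝ) (b b' : ℕ → ℕ → ℝ) (Δ : ℝ),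
      N n = 1 → 0 ≤ Δ →
      (∑ l ∈ Finset.range (n + 1),
        ((∑ i ∈ Finset.range (N l), (b l i) ^ 2) +
          ∑ i ∈ Finset.range (N l),
            ∑ j ∈ Finset.range (if l = 0 then d else N (l - 1)), (w l i j) ^ 2)) ≤ r ^ 2 →
      (∑ l ∈ Finset.range (n + 1),
        ((∑ i ∈ Finset.range (N l), (b' l i) ^ 2) +
          ∑ i ∈ Finset.range (N l),
            ∑ j ∈ Finset.range (if l = 0 then d else N (l - 1)), (w' l i j) ^ 2)) ≤ r ^ 2 →
      (∑ l ∈ Finset.range (n + 1),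
        ((∑ i ∈ Finset.range (N l), (b l i - b' l i) ^ 2) +
          ∑ i ∈ Finset.range (N l),
            ∑ j ∈ Finset.range (if l = 0 then d else N (l - 1)),
              (w l i j - w' l i j) ^ 2)) ≤ Δ ^ 2 →
      (netF d N w b ζ x n 0 - netF d N w' b' ζ x n 0) ^ 2 ≤ 2 * K * Δ ^ 2 := by
  refine ⟨lipConst (r ^ 2) (∑ j, x j ^ 2) n, fun N w w' b b' Δ hN _ hθ hθ' hδ => ?_⟩
  have h := sum_sq_netF_sub_le hζ hζ0 (x := x) n
    (fun k hk => layerSqNorm_le_of_sum_le (w := w) (b := b) hθ hk)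
    (fun k hk => layerSqNorm_le_of_sum_le (w := w') (b := b') hθ' hk)
    (fun k hk => layerSqNorm_le_of_sum_le (w := w - w') (b := b - b') hδ hk)
  rw [hN, sum_range_one] at h
  linarith [sq_nonneg (netF d N w b ζ x n 0 - netF d N w' b' ζ x n 0)]

/-- Local Lipschitz continuity of the network output in its parameters (Lemma 1): for
every `r > 0`, `x` and depth `n` there is a constant `K̄(r,x,n)` such that whenever two
parameter sequences have `ℓ²` norm at most `r` and their difference has `ℓ²` norm at
most `Δ`, the outputs satisfy `(u_θ(x) - u_θ̃(x))² ≤ 2 K̄ Δ²`. -/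
theorem stmt_14 (d n : ℕ) (hd : 1 ≤ d) (hn : 1 ≤ n)
    (ζ : ℝ → ℝ) (hζ : LipschitzWith 1 ζ) (hζ0 : ζ 0 = 0)
    (x : Fin d → ℝ) (r : ℝ) (hr : 0 < r) :
    ∃ K : ℝ, ∀ (N : ℕ → ℕ) (w w' : ℕ → ℕ → ℕ → ℝ) (b b' : ℕ → ℕ → ℝ) (Δ : ℝ),
      N n = 1 → 0 ≤ Δ →
      (∑ l ∈ Finset.range (n + 1),
        ((∑ i ∈ Finset.range (N l), (b l i) ^ 2) +
          ∑ i ∈ Finset.range (N l),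
            ∑ j ∈ Finset.range (if l = 0 then d else N (l - 1)), (w l i j) ^ 2)) ≤ r ^ 2 →
      (∑ l ∈ Finset.range (n + 1),
        ((∑ i ∈ Finset.range (N l), (b' l i) ^ 2) +
          ∑ i ∈ Finset.range (N l),
            ∑ j ∈ Finset.range (if l = 0 then d else N (l - 1)), (w' l i j) ^ 2)) ≤ r ^ 2 →
      (∑ l ∈ Finset.range (n + 1),
        ((∑ i ∈ Finset.range (N l), (b l i - b' l i) ^ 2) +
          ∑ i ∈ Finset.range (N l),
            ∑ j ∈ Finset.range (if l = 0 then d else N (l - 1)),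
              (w l i j - w' l i j) ^ 2)) ≤ Δ ^ 2 →
      (netF d N w b ζ x n 0 - netF d N w' b' ζ x n 0) ^ 2 ≤ 2 * K * Δ ^ 2 :=
  stmt_14_general d n ζ hζ hζ0 x r
end
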